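/- arXiv:1510.01048 — 2 statements merged into one kernel-verified Lean document; each statement's English description precedes it below -/
import Mathlib

section
/- With the notation of the one-step Euler map ℰ(x,u) = x + Δ b(x) + √Δ σ(x)u with ε ∼ 𝒩(0,I_q), define the transition operator Pg(x) = E[g(ℰ(x,ε))] for Lipschitz g : ℝ^d → ℝ. Then P maps Lipschitz functions to Lipschitz functions and [Pg]_Lip ≤ e^{Δ C} [g]_Lip, where C = [b]_Lip + (1/2)([σ]²_Lip + Δ [b]²_Lip). -/
open MeasureTheory ProbabilityTheory

open Real Filter ENNReal NNReal

/-- The one-step Euler map `ℰ(x,u) = x + Δ b(x) + √Δ σ(x) u`. -/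
noncomputable def eulerMap {d q : ℕ} (Δ : ℝ)
    (b : EuclideanSpace ℝ (Fin d) → EuclideanSpace ℝ (Fin d))
    (σ : EuclideanSpace ℝ (Fin d) → Matrix (Fin d) (Fin q) ℝ)
    (x : EuclideanSpace ℝ (Fin d)) (u : EuclideanSpace ℝ (Fin q)) :
    EuclideanSpace ℝ (Fin d) :=
  x + Δ • b x + Real.sqrt Δ •
    (WithLp.equiv 2 (Fin d → ℝ)).symm ((σ x).mulVec (WithLp.equiv 2 (Fin q → ℝ) u))

lemma myint_mul_exp (b : ℝ) (hb : 0 < b) : ∫ x : ℝ, x * Real.exp (-b * x ^ 2) = 0 := by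
  have hderiv : ∀ x : ℝ, HasDerivAt (fun x : ℝ => -(2*b)⁻¹ * Real.exp (-b * x ^ 2))
      (x * Real.exp (-b * x ^ 2)) x := by
    intro x
    have h1 : HasDerivAt (fun x : ℝ => -b * x ^ 2) (-b * (2 * x)) x := by
      simpa using ((hasDerivAt_pow 2 x).const_mul (-b))
    have h2 := (h1.exp).const_mul (-(2*b)⁻¹)
    refine h2.congr_deriv ?_
    field_simp [hb.ne']
  exact integral_eq_zero_of_hasDerivAt_of_integrable hderiv
    (integrable_mul_exp_neg_mul_sq hb)
    ((integrable_exp_neg_mul_sq hb).const_mul _)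

lemma myint_sq_exp (b : ℝ) (hb : 0 < b) :
    ∫ x : ℝ, x ^ 2 * Real.exp (-b * x ^ 2) = Real.sqrt (π / b) / (2 * b) := by
  have hsq : Integrable (fun x : ℝ => x ^ 2 * Real.exp (-b * x ^ 2)) := by
    have := integrable_rpow_mul_exp_neg_mul_sq hb (s := 2) (by norm_num)
    rw [show ((2:ℝ)) = ((2:ℕ):ℝ) by norm_num] at this; simpa [Real.rpow_natCast] using this
  have hderiv : ∀ x : ℝ, HasDerivAt (fun x : ℝ => -(2*b)⁻¹ * (x * Real.exp (-b * x ^ 2)))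
      (x ^ 2 * Real.exp (-b * x ^ 2) - (2*b)⁻¹ * Real.exp (-b * x ^ 2)) x := by
    intro x
    have h1 : HasDerivAt (fun x : ℝ => -b * x ^ 2) (-b * (2 * x)) x := by
      simpa using ((hasDerivAt_pow 2 x).const_mul (-b))
    have h3 := ((hasDerivAt_id x).mul h1.exp).const_mul (-(2*b)⁻¹)
    refine h3.congr_deriv ?_
    field_simp [hb.ne']
    simp only [id_eq]; ring
  have h0 : ∫ x : ℝ, (x ^ 2 * Real.exp (-b * x ^ 2) - (2*b)⁻¹ * Real.exp (-b * x ^ 2)) = 0 :=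
    integral_eq_zero_of_hasDerivAt_of_integrable hderiv
      (hsq.sub ((integrable_exp_neg_mul_sq hb).const_mul _))
      ((integrable_mul_exp_neg_mul_sq hb).const_mul _)
  rw [integral_sub hsq ((integrable_exp_neg_mul_sq hb).const_mul _)] at h0
  rw [sub_eq_zero] at h0
  rw [h0, MeasureTheory.integral_const_mul, integral_gaussian]
  field_simp

lemma mypdf_eq (x : ℝ) :
    gaussianPDFReal 0 1 x = (Real.sqrt (2*π))⁻¹ * Real.exp (-(2:ℝ)⁻¹ * x ^ 2) := by
  simp only [gaussianPDFReal, NNReal.coe_one, mul_one, sub_zero]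
  congr 1
  ring_nf

lemma mygauss_density : gaussianReal 0 1
    = MeasureTheory.Measure.withDensity volume (fun x => ((gaussianPDFReal 0 1 x).toNNReal : ℝ≥0∞)) := by
  rw [gaussianReal_of_var_ne_zero 0 one_ne_zero]
  rfl

lemma mygauss_integrable_iff (g : ℝ → ℝ) :
    Integrable g (gaussianReal 0 1) ↔
      Integrable (fun x => gaussianPDFReal 0 1 x * g x) volume := by
  rw [mygauss_density,
    integrable_withDensity_iff_integrable_smul ((measurable_gaussianPDFReal 0 1).real_toNNReal)]
  constructor <;> intro h <;> refine h.congr (Filter.Eventually.of_forall fun x => ?_) <;>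
    simp [NNReal.smul_def, Real.coe_toNNReal _ (gaussianPDFReal_nonneg 0 1 x)]

lemma mygauss_integral_eq (g : ℝ → ℝ) :
    ∫ x, g x ∂(gaussianReal 0 1) = ∫ x, gaussianPDFReal 0 1 x * g x := by
  rw [mygauss_density,
    integral_withDensity_eq_integral_smul ((measurable_gaussianPDFReal 0 1).real_toNNReal)]
  refine integral_congr_ae (Filter.Eventually.of_forall fun x => ?_)
  simp [NNReal.smul_def, Real.coe_toNNReal _ (gaussianPDFReal_nonneg 0 1 x)]

lemma mygauss_i1 : Integrable (fun x : ℝ => x) (gaussianReal 0 1) := by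
  rw [mygauss_integrable_iff]
  have h := (integrable_mul_exp_neg_mul_sq (b := (2:ℝ)⁻¹) (by norm_num)).const_mul
    ((Real.sqrt (2*π))⁻¹)
  refine h.congr (Filter.Eventually.of_forall fun x => ?_)
  simp only [mypdf_eq]; ring

lemma mygauss_i2 : Integrable (fun x : ℝ => x ^ 2) (gaussianReal 0 1) := by
  rw [mygauss_integrable_iff]
  have hsq : Integrable (fun x : ℝ => x ^ 2 * Real.exp (-(2:ℝ)⁻¹ * x ^ 2)) := by
    have := integrable_rpow_mul_exp_neg_mul_sq (b := (2:ℝ)⁻¹) (by norm_num) (s := 2) (by norm_num)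
    rw [show ((2:ℝ)) = ((2:ℕ):ℝ) by norm_num] at this
    simpa [Real.rpow_natCast] using this
  refine (hsq.const_mul ((Real.sqrt (2*π))⁻¹)).congr (Filter.Eventually.of_forall fun x => ?_)
  simp only [mypdf_eq]; ring

lemma mygauss_mean : ∫ x, x ∂(gaussianReal 0 1) = 0 := by
  rw [mygauss_integral_eq]
  have : ∫ x : ℝ, gaussianPDFReal 0 1 x * x
      = ∫ x : ℝ, (Real.sqrt (2*π))⁻¹ * (x * Real.exp (-(2:ℝ)⁻¹ * x ^ 2)) := by
    refine integral_congr_ae (Filter.Eventually.of_forall fun x => ?_)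
    simp only [mypdf_eq]; ring
  rw [this, MeasureTheory.integral_const_mul, myint_mul_exp _ (by norm_num), mul_zero]

lemma mygauss_var : ∫ x, x ^ 2 ∂(gaussianReal 0 1) = 1 := by
  rw [mygauss_integral_eq]
  have : ∫ x : ℝ, gaussianPDFReal 0 1 x * x ^ 2
      = ∫ x : ℝ, (Real.sqrt (2*π))⁻¹ * (x ^ 2 * Real.exp (-(2:ℝ)⁻¹ * x ^ 2)) := by
    refine integral_congr_ae (Filter.Eventually.of_forall fun x => ?_)
    simp only [mypdf_eq]; ring
  rw [this, MeasureTheory.integral_const_mul, myint_sq_exp _ (by norm_num)]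
  rw [show π / (2:ℝ)⁻¹ = 2*π by field_simp]
  rw [show ((2:ℝ) * 2⁻¹) = 1 by norm_num, div_one]
  rw [inv_mul_cancel₀]
  positivity

lemma mypi_integral {ι : Type*} [Fintype ι] (f : ι → ℝ → ℝ) :
    ∫ u : ι → ℝ, ∏ i, f i (u i) ∂(Measure.pi fun _ => gaussianReal 0 1)
      = ∏ i, ∫ x, f i x ∂(gaussianReal 0 1) := by
  letI : MeasureSpace ℝ := ⟨gaussianReal 0 1⟩
  haveI : SigmaFinite (volume : Measure ℝ) :=
    inferInstanceAs (SigmaFinite (gaussianReal 0 1))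
  exact MeasureTheory.integral_fintype_prod_eq_prod f

lemma mypi_integrable {ι : Type*} [Fintype ι] {f : ι → ℝ → ℝ}
    (hf : ∀ i, Integrable (f i) (gaussianReal 0 1)) :
    Integrable (fun u : ι → ℝ => ∏ i, f i (u i)) (Measure.pi fun _ => gaussianReal 0 1) := by
  letI : MeasureSpace ℝ := ⟨gaussianReal 0 1⟩
  haveI : SigmaFinite (volume : Measure ℝ) :=
    inferInstanceAs (SigmaFinite (gaussianReal 0 1))
  exact MeasureTheory.Integrable.fintype_prod hf


section coords
variable {q : ℕ}

local notation "ν" => (Measure.pi fun _ : Fin q => gaussianReal 0 1)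

lemma myI1 (j : Fin q) : Integrable (fun u : Fin q → ℝ => u j) ν := by
  have h := mypi_integrable (f := fun i (t : ℝ) => if i = j then t else 1) (fun i => by
    rcases eq_or_ne i j with rfl | hj
    · simpa using mygauss_i1
    · simpa [hj] using (integrable_const (1:ℝ)))
  refine h.congr (Filter.Eventually.of_forall fun u => ?_)
  simp [Finset.prod_ite_eq']

lemma myE1 (j : Fin q) : ∫ u : Fin q → ℝ, u j ∂ν = 0 := by
  have h : (fun u : Fin q → ℝ => u j)
      = fun u => ∏ i, (fun i (t : ℝ) => if i = j then t else 1) i (u i) := by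
    funext u; simp [Finset.prod_ite_eq']
  rw [h, mypi_integral (fun i (t : ℝ) => if i = j then t else 1)]
  refine Finset.prod_eq_zero (Finset.mem_univ j) ?_
  simpa using mygauss_mean

lemma myI2 (j k : Fin q) : Integrable (fun u : Fin q → ℝ => u j * u k) ν := by
  have h := mypi_integrable
    (f := fun i (t : ℝ) => (if i = j then t else 1) * (if i = k then t else 1)) (fun i => by
    rcases eq_or_ne i j with rfl | hj
    · rcases eq_or_ne i k with rfl | hk
      · simpa [pow_two] using mygauss_i2
      · simpa [hk] using mygauss_i1
    · rcases eq_or_ne i k with rfl | hk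
      · simpa [hj] using mygauss_i1
      · simpa [hj, hk] using (integrable_const (1:ℝ)))
  refine h.congr (Filter.Eventually.of_forall fun u => ?_)
  show (∏ i, ((if i = j then u i else 1) * if i = k then u i else 1)) = u j * u k
  rw [Finset.prod_mul_distrib]
  simp [Finset.prod_ite_eq']

lemma myE2 (j k : Fin q) :
    ∫ u : Fin q → ℝ, u j * u k ∂ν = if j = k then 1 else 0 := by
  have h : (fun u : Fin q → ℝ => u j * u k)
      = fun u => ∏ i, (fun i (t : ℝ) =>
          (if i = j then t else 1) * (if i = k then t else 1)) i (u i) := by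
    funext u
    show u j * u k = ∏ i, ((if i = j then u i else 1) * if i = k then u i else 1)
    rw [Finset.prod_mul_distrib]
    simp [Finset.prod_ite_eq']
  rw [h, mypi_integral (fun i (t : ℝ) => (if i = j then t else 1) * (if i = k then t else 1))]
  by_cases hjk : j = k
  · subst hjk
    rw [if_pos rfl]
    refine Finset.prod_eq_one fun i _ => ?_
    rcases eq_or_ne i j with rfl | hj
    · simpa [pow_two] using mygauss_var
    · simp [hj]
  · rw [if_neg hjk]
    refine Finset.prod_eq_zero (Finset.mem_univ j) ?_
    simpa [hjk] using mygauss_mean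

end coords

section moment
variable {q : ℕ}

local notation "ν" => (Measure.pi fun _ : Fin q => gaussianReal 0 1)

lemma my_expand_sq (c : ℝ) (m u : Fin q → ℝ) :
    (c + ∑ j, m j * u j) ^ 2
      = c ^ 2 + (∑ j, (2 * c * m j) * u j)
        + ∑ j, ∑ k, (m j * m k) * (u j * u k) := by
  have h1 : (∑ j, (2 * c * m j) * u j) = 2 * c * (∑ j, m j * u j) := by
    rw [Finset.mul_sum]; exact Finset.sum_congr rfl fun j _ => by ring
  have h2 : (∑ j, ∑ k, (m j * m k) * (u j * u k))
      = (∑ j, m j * u j) * (∑ k, m k * u k) := by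
    rw [Finset.sum_mul_sum]
    exact Finset.sum_congr rfl fun j _ => Finset.sum_congr rfl fun k _ => by ring
  rw [h1, h2]; ring

lemma my_sq_integrable (c : ℝ) (m : Fin q → ℝ) :
    Integrable (fun u : Fin q → ℝ => (c + ∑ j, m j * u j) ^ 2) ν := by
  have h : (fun u : Fin q → ℝ => (c + ∑ j, m j * u j) ^ 2)
      = fun u => c ^ 2 + (∑ j, (2 * c * m j) * u j)
        + ∑ j, ∑ k, (m j * m k) * (u j * u k) := funext fun u => my_expand_sq c m u
  rw [h]
  exact ((integrable_const _).add
      (integrable_finset_sum _ fun j _ => (myI1 j).const_mul _)).add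
    (integrable_finset_sum _ fun j _ =>
      integrable_finset_sum _ fun k _ => (myI2 j k).const_mul _)

lemma my_second_moment (c : ℝ) (m : Fin q → ℝ) :
    ∫ u : Fin q → ℝ, (c + ∑ j, m j * u j) ^ 2 ∂ν = c ^ 2 + ∑ j, (m j) ^ 2 := by
  have h : (fun u : Fin q → ℝ => (c + ∑ j, m j * u j) ^ 2)
      = fun u => (c ^ 2 + ∑ j, (2 * c * m j) * u j)
        + ∑ j, ∑ k, (m j * m k) * (u j * u k) := funext fun u => my_expand_sq c m u
  have hB : Integrable (fun u : Fin q → ℝ => ∑ j, (2 * c * m j) * u j) ν :=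
    integrable_finset_sum _ fun j _ => (myI1 j).const_mul _
  have hA : Integrable (fun u : Fin q → ℝ => c ^ 2 + ∑ j, (2 * c * m j) * u j) ν :=
    (integrable_const _).add hB
  have hC : Integrable
      (fun u : Fin q → ℝ => ∑ j, ∑ k, (m j * m k) * (u j * u k)) ν :=
    integrable_finset_sum _ fun j _ =>
      integrable_finset_sum _ fun k _ => (myI2 j k).const_mul _
  rw [h, integral_add hA hC, integral_add (integrable_const _) hB,
    integral_finset_sum _ (fun j _ => (myI1 j).const_mul _),
    integral_finset_sum _ (fun j _ =>
      integrable_finset_sum _ fun k _ => (myI2 j k).const_mul _)]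
  have e2 : ∀ j : Fin q, ∫ u : Fin q → ℝ, ∑ k, (m j * m k) * (u j * u k) ∂ν
      = (m j) ^ 2 := by
    intro j
    rw [integral_finset_sum _ (fun k _ => (myI2 j k).const_mul _)]
    simp only [MeasureTheory.integral_const_mul, myE2, mul_ite, mul_one, mul_zero]
    simp [Finset.sum_ite_eq, pow_two]
  simp only [MeasureTheory.integral_const_mul, myE1, mul_zero, Finset.sum_const_zero]
  rw [Finset.sum_congr rfl fun j _ => e2 j]
  simp
end moment

lemma my_cs {α : Type*} [MeasurableSpace α] (μ : Measure α) [IsProbabilityMeasure μ]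
    {h : α → ℝ} (h0 : ∀ a, 0 ≤ h a) (hi : Integrable h μ)
    (hi2 : Integrable (fun a => h a ^ 2) μ) :
    ∫ a, h a ∂μ ≤ Real.sqrt (∫ a, h a ^ 2 ∂μ) := by
  set I := ∫ a, h a ∂μ with hI
  have hInn : 0 ≤ I := integral_nonneg h0
  have hnn2 : 0 ≤ ∫ a, h a ^ 2 ∂μ := integral_nonneg fun a => sq_nonneg _
  rw [Real.le_sqrt hInn hnn2]
  have key : 0 ≤ ∫ a, (h a - I) ^ 2 ∂μ := integral_nonneg fun a => sq_nonneg _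
  have expand : ∫ a, (h a - I) ^ 2 ∂μ = (∫ a, h a ^ 2 ∂μ) - I ^ 2 := by
    have hrw : (fun a => (h a - I) ^ 2)
        = fun a => (h a ^ 2 - (2 * I) * h a) + I ^ 2 := funext fun a => by ring
    have hiA : Integrable (fun a => h a ^ 2 - (2 * I) * h a) μ := hi2.sub (hi.const_mul _)
    rw [hrw, integral_add hiA (integrable_const _),
      integral_sub hi2 (hi.const_mul _), MeasureTheory.integral_const_mul, integral_const]
    simp only [probReal_univ, ENNReal.toReal_one, smul_eq_mul, one_mul]
    rw [← hI]; ring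
  linarith

section dom
variable {q : ℕ}
local notation "ν" => (Measure.pi fun _ : Fin q => gaussianReal 0 1)

lemma my_l1_integrable (f : (Fin q → ℝ) → ℝ) (hmeas : AEStronglyMeasurable f ν)
    (c : ℝ) (w : Fin q → ℝ) (hb : ∀ u, |f u| ≤ c + ∑ j, w j * |u j|) :
    Integrable f ν := by
  have hG : Integrable (fun u : Fin q → ℝ => c + ∑ j, w j * |u j|) ν :=
    (integrable_const c).add
      (integrable_finset_sum _ fun j _ => ((myI1 j).abs.const_mul (w j)))
  refine Integrable.mono' hG hmeas (Filter.Eventually.of_forall fun u => ?_)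
  simpa [Real.norm_eq_abs] using hb u

end dom

lemma my_norm_le_l1 {d : ℕ} (v : Fin d → ℝ) :
    ‖(WithLp.equiv 2 (Fin d → ℝ)).symm v‖ ≤ ∑ i, |v i| := by
  rw [EuclideanSpace.norm_eq]
  have h1 : ∀ i : Fin d, ‖((WithLp.equiv 2 (Fin d → ℝ)).symm v) i‖ = |v i| := fun i => rfl
  simp only [h1]
  have hS : ∀ i ∈ Finset.univ, |v i| ^ 2 ≤ |v i| * ∑ j, |v j| := fun i _ => by
    rw [pow_two]
    exact mul_le_mul_of_nonneg_left
      (Finset.single_le_sum (fun j _ => abs_nonneg (v j)) (Finset.mem_univ i)) (abs_nonneg _)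
  have h2 := Finset.sum_le_sum hS
  rw [← Finset.sum_mul] at h2
  calc Real.sqrt (∑ i, |v i| ^ 2) ≤ Real.sqrt ((∑ j, |v j|) ^ 2) := by
        refine Real.sqrt_le_sqrt ?_
        calc (∑ i, |v i| ^ 2) ≤ (∑ j, |v j|) * ∑ j, |v j| := h2
        _ = (∑ j, |v j|) ^ 2 := by ring
    _ = ∑ j, |v j| := Real.sqrt_sq (Finset.sum_nonneg fun j _ => abs_nonneg _)

lemma my_smul_norm_bound {d q : ℕ} (s : ℝ) (hs : 0 ≤ s)
    (N : Matrix (Fin d) (Fin q) ℝ) (u : Fin q → ℝ) :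
    ‖s • (WithLp.equiv 2 (Fin d → ℝ)).symm (N.mulVec u)‖
      ≤ ∑ j, (s * ∑ i, |N i j|) * |u j| := by
  calc ‖s • (WithLp.equiv 2 (Fin d → ℝ)).symm (N.mulVec u)‖
      = s * ‖(WithLp.equiv 2 (Fin d → ℝ)).symm (N.mulVec u)‖ := by
        rw [norm_smul, Real.norm_eq_abs, abs_of_nonneg hs]
    _ ≤ s * ∑ i, |(N.mulVec u) i| :=
        mul_le_mul_of_nonneg_left (my_norm_le_l1 _) hs
    _ ≤ s * ∑ i, ∑ j, |N i j| * |u j| := by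
        refine mul_le_mul_of_nonneg_left (Finset.sum_le_sum fun i _ => ?_) hs
        calc |(N.mulVec u) i| = |∑ j, N i j * u j| := by
              simp [Matrix.mulVec, dotProduct]
          _ ≤ ∑ j, |N i j * u j| := Finset.abs_sum_le_sum_abs _ _
          _ = ∑ j, |N i j| * |u j| := Finset.sum_congr rfl fun j _ => abs_mul _ _
    _ = ∑ j, (s * ∑ i, |N i j|) * |u j| := by
        rw [Finset.sum_comm, Finset.mul_sum]
        refine Finset.sum_congr rfl fun j _ => ?_
        rw [← Finset.sum_mul]
        ring

lemma my_cont_lin {d q : ℕ} (N : Matrix (Fin d) (Fin q) ℝ) :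
    Continuous fun u : Fin q → ℝ =>
      (WithLp.equiv 2 (Fin d → ℝ)).symm (N.mulVec u) := by
  refine (PiLp.continuous_toLp 2 (fun _ : Fin d => ℝ)).comp ?_
  exact N.mulVecLin.continuous_of_finiteDimensional


noncomputable def myF {d q : ℕ} (Δ : ℝ)
    (b : EuclideanSpace ℝ (Fin d) → EuclideanSpace ℝ (Fin d))
    (σ : EuclideanSpace ℝ (Fin d) → Matrix (Fin d) (Fin q) ℝ)
    (z : EuclideanSpace ℝ (Fin d)) (u : Fin q → ℝ) : EuclideanSpace ℝ (Fin d) :=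
  z + Δ • b z + Real.sqrt Δ • (WithLp.equiv 2 (Fin d → ℝ)).symm ((σ z).mulVec u)

/-- The transition operator `Pg(x) = E[g(ℰ(x,ε))]` maps `L`-Lipschitz functions to
Lipschitz functions with `[Pg]_Lip ≤ e^{ΔC} L`, where
`C = [b]_Lip + ([σ]²_Lip + Δ[b]²_Lip)/2`. -/
theorem stmt4 {Ω : Type*} {mΩ : MeasurableSpace Ω} (P : Measure Ω) [IsProbabilityMeasure P]
    {d q : ℕ} (Δ : ℝ) (hΔ : 0 < Δ)
    (b : EuclideanSpace ℝ (Fin d) → EuclideanSpace ℝ (Fin d))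
    (σ : EuclideanSpace ℝ (Fin d) → Matrix (Fin d) (Fin q) ℝ)
    (Kb Kσ : ℝ) (hKb : 0 ≤ Kb) (hKσ : 0 ≤ Kσ)
    (hb : ∀ x x', ‖b x - b x'‖ ≤ Kb * ‖x - x'‖)
    (hσ : ∀ x x', Real.sqrt (∑ i, ∑ j, (σ x i j - σ x' i j) ^ 2) ≤ Kσ * ‖x - x'‖)
    (ε : Ω → EuclideanSpace ℝ (Fin q)) (hεmeas : Measurable ε)
    (hεlaw : Measure.map (fun ω => WithLp.equiv 2 (Fin q → ℝ) (ε ω)) P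
      = Measure.pi fun _ : Fin q => gaussianReal 0 1)
    (g : EuclideanSpace ℝ (Fin d) → ℝ) (L : ℝ) (hL : 0 ≤ L)
    (hg : ∀ x x', |g x - g x'| ≤ L * ‖x - x'‖) :
    ∀ x x' : EuclideanSpace ℝ (Fin d),
      |(∫ ω, g (eulerMap Δ b σ x (ε ω)) ∂P) - ∫ ω, g (eulerMap Δ b σ x' (ε ω)) ∂P|
        ≤ Real.exp (Δ * (Kb + (Kσ ^ 2 + Δ * Kb ^ 2) / 2)) * L * ‖x - x'‖ := by
  intro x x'
  classical
  set ν : Measure (Fin q → ℝ) := Measure.pi fun _ : Fin q => gaussianReal 0 1 with hνdef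
  set C : ℝ := Kb + (Kσ ^ 2 + Δ * Kb ^ 2) / 2 with hCdef
  -- continuity of g
  have hgc : Continuous g := by
    have hLip : LipschitzWith (Real.toNNReal L) g := by
      refine LipschitzWith.of_dist_le_mul fun y z => ?_
      rw [Real.dist_eq, dist_eq_norm, Real.coe_toNNReal L hL]
      exact hg y z
    exact hLip.continuous
  have hFcont : ∀ z, Continuous fun u : Fin q → ℝ => myF Δ b σ z u := by
    intro z
    exact continuous_const.add ((my_cont_lin (σ z)).const_smul (Real.sqrt Δ))
  have hgF : ∀ z, Continuous fun u : Fin q → ℝ => g (myF Δ b σ z u) :=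
    fun z => hgc.comp (hFcont z)
  -- measurability of the law map
  have hT : Measurable fun ω => WithLp.equiv 2 (Fin q → ℝ) (ε ω) := (WithLp.measurable_ofLp 2 _).comp hεmeas
  -- change of variables
  have hmap : ∀ z, ∫ ω, g (eulerMap Δ b σ z (ε ω)) ∂P = ∫ u, g (myF Δ b σ z u) ∂ν := by
    intro z
    calc ∫ ω, g (eulerMap Δ b σ z (ε ω)) ∂P
        = ∫ u, g (myF Δ b σ z u)
            ∂(Measure.map (fun ω => WithLp.equiv 2 (Fin q → ℝ) (ε ω)) P) :=
          (integral_map hT.aemeasurable (hgF z).aestronglyMeasurable).symm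
      _ = ∫ u, g (myF Δ b σ z u) ∂ν := by rw [hεlaw]
  -- integrability of g ∘ F z
  have hIntg : ∀ z, Integrable (fun u => g (myF Δ b σ z u)) ν := by
    intro z
    refine my_l1_integrable _ (hgF z).aestronglyMeasurable
      (|g (z + Δ • b z)| ) (fun j => L * (Real.sqrt Δ * ∑ i, |σ z i j|)) fun u => ?_
    have h3 : myF Δ b σ z u - (z + Δ • b z)
        = Real.sqrt Δ • (WithLp.equiv 2 (Fin d → ℝ)).symm ((σ z).mulVec u) :=
      add_sub_cancel_left _ _
    have h2 : |g (myF Δ b σ z u) - g (z + Δ • b z)|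
        ≤ L * ‖myF Δ b σ z u - (z + Δ • b z)‖ := hg _ _
    have h4 := my_smul_norm_bound (Real.sqrt Δ) (Real.sqrt_nonneg Δ) (σ z) u
    rw [h3] at h2
    have h5 : |g (myF Δ b σ z u)| ≤ |g (z + Δ • b z)| + |g (myF Δ b σ z u) - g (z + Δ • b z)| := by
      have := abs_sub_abs_le_abs_sub (g (myF Δ b σ z u)) (g (z + Δ • b z))
      linarith
    have h6 : L * ‖Real.sqrt Δ • (WithLp.equiv 2 (Fin d → ℝ)).symm ((σ z).mulVec u)‖
        ≤ ∑ j, (L * (Real.sqrt Δ * ∑ i, |σ z i j|)) * |u j| := by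
      calc L * ‖Real.sqrt Δ • (WithLp.equiv 2 (Fin d → ℝ)).symm ((σ z).mulVec u)‖
          ≤ L * ∑ j, (Real.sqrt Δ * ∑ i, |σ z i j|) * |u j| :=
            mul_le_mul_of_nonneg_left h4 hL
        _ = ∑ j, (L * (Real.sqrt Δ * ∑ i, |σ z i j|)) * |u j| := by
            rw [Finset.mul_sum]; exact Finset.sum_congr rfl fun j _ => by ring
    linarith
  -- the difference field
  set a : EuclideanSpace ℝ (Fin d) := (x - x') + Δ • (b x - b x') with hadef
  set M : Matrix (Fin d) (Fin q) ℝ := σ x - σ x' with hMdef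
  set h : (Fin q → ℝ) → ℝ := fun u =>
    ‖a + Real.sqrt Δ • (WithLp.equiv 2 (Fin d → ℝ)).symm (M.mulVec u)‖ with hhdef
  have hFdiff : ∀ u, myF Δ b σ x u - myF Δ b σ x' u
      = a + Real.sqrt Δ • (WithLp.equiv 2 (Fin d → ℝ)).symm (M.mulVec u) := by
    intro u
    have hs : (WithLp.equiv 2 (Fin d → ℝ)).symm (M.mulVec u)
        = (WithLp.equiv 2 (Fin d → ℝ)).symm ((σ x).mulVec u)
          - (WithLp.equiv 2 (Fin d → ℝ)).symm ((σ x').mulVec u) := by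
      rw [hMdef, Matrix.sub_mulVec]; rfl
    rw [hs, hadef, myF, myF, smul_sub, smul_sub]
    abel
  have hpt : ∀ u, |g (myF Δ b σ x u) - g (myF Δ b σ x' u)| ≤ L * h u := by
    intro u
    have := hg (myF Δ b σ x u) (myF Δ b σ x' u)
    rwa [hFdiff u] at this
  -- continuity & integrability of h
  have hhcont : Continuous h := (continuous_const.add ((my_cont_lin M).const_smul (Real.sqrt Δ))).norm
  have hhb : ∀ u, |h u| ≤ ‖a‖ + ∑ j, (Real.sqrt Δ * ∑ i, |M i j|) * |u j| := by
    intro u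
    rw [abs_of_nonneg (norm_nonneg _)]
    calc h u ≤ ‖a‖ + ‖Real.sqrt Δ • (WithLp.equiv 2 (Fin d → ℝ)).symm (M.mulVec u)‖ :=
          norm_add_le _ _
      _ ≤ ‖a‖ + ∑ j, (Real.sqrt Δ * ∑ i, |M i j|) * |u j| :=
          add_le_add_right (my_smul_norm_bound _ (Real.sqrt_nonneg Δ) M u) _
  have hInth : Integrable h ν :=
    my_l1_integrable h hhcont.aestronglyMeasurable ‖a‖ _ hhb
  have hcomp : ∀ u : Fin q → ℝ,
      h u ^ 2 = ∑ i, (a i + ∑ j, (Real.sqrt Δ * M i j) * u j) ^ 2 := by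
    intro u
    rw [hhdef]
    simp only []
    rw [EuclideanSpace.norm_eq, Real.sq_sqrt (Finset.sum_nonneg fun i _ => sq_nonneg _)]
    refine Finset.sum_congr rfl fun i _ => ?_
    rw [Real.norm_eq_abs, sq_abs]
    congr 1
    have : (a + Real.sqrt Δ • (WithLp.equiv 2 (Fin d → ℝ)).symm (M.mulVec u)) i
        = a i + Real.sqrt Δ * (M.mulVec u) i := rfl
    rw [this]
    congr 1
    simp only [Matrix.mulVec, dotProduct]
    rw [Finset.mul_sum]
    exact Finset.sum_congr rfl fun j _ => by ring
  have hInth2 : Integrable (fun u => h u ^ 2) ν := by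
    have : (fun u => h u ^ 2)
        = fun u : Fin q → ℝ => ∑ i, (a i + ∑ j, (Real.sqrt Δ * M i j) * u j) ^ 2 :=
      funext hcomp
    rw [this]
    exact integrable_finset_sum _ fun i _ => my_sq_integrable _ _
  -- value of the second moment
  have hm2 : ∫ u, h u ^ 2 ∂ν = ‖a‖ ^ 2 + Δ * ∑ i, ∑ j, (M i j) ^ 2 := by
    have heq : (fun u => h u ^ 2)
        = fun u : Fin q → ℝ => ∑ i, (a i + ∑ j, (Real.sqrt Δ * M i j) * u j) ^ 2 :=
      funext hcomp
    rw [heq, integral_finset_sum _ (fun i _ => my_sq_integrable _ _)]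
    have hmom : ∀ i : Fin d, (∫ u : Fin q → ℝ,
        (a i + ∑ j, (Real.sqrt Δ * M i j) * u j) ^ 2 ∂ν)
        = (a i) ^ 2 + ∑ j, (Real.sqrt Δ * M i j) ^ 2 := fun i =>
      my_second_moment (a i) (fun j => Real.sqrt Δ * M i j)
    rw [Finset.sum_congr rfl fun i _ => hmom i, Finset.sum_add_distrib]
    congr 1
    · rw [EuclideanSpace.norm_eq, Real.sq_sqrt (Finset.sum_nonneg fun i _ => sq_nonneg _)]
      exact Finset.sum_congr rfl fun i _ => by rw [Real.norm_eq_abs, sq_abs]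
    · rw [Finset.mul_sum]
      refine Finset.sum_congr rfl fun i _ => ?_
      rw [Finset.mul_sum]
      refine Finset.sum_congr rfl fun j _ => ?_
      rw [mul_pow, Real.sq_sqrt hΔ.le]
  -- bounds
  have ha : ‖a‖ ≤ (1 + Δ * Kb) * ‖x - x'‖ := by
    calc ‖a‖ ≤ ‖x - x'‖ + ‖Δ • (b x - b x')‖ := norm_add_le _ _
      _ = ‖x - x'‖ + Δ * ‖b x - b x'‖ := by
          rw [norm_smul, Real.norm_eq_abs, abs_of_nonneg hΔ.le]
      _ ≤ ‖x - x'‖ + Δ * (Kb * ‖x - x'‖) :=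
          add_le_add_right (mul_le_mul_of_nonneg_left (hb x x') hΔ.le) _
      _ = (1 + Δ * Kb) * ‖x - x'‖ := by ring
  have hM : ∑ i, ∑ j, (M i j) ^ 2 ≤ Kσ ^ 2 * ‖x - x'‖ ^ 2 := by
    have h1 := hσ x x'
    have hnn : 0 ≤ ∑ i, ∑ j, (σ x i j - σ x' i j) ^ 2 :=
      Finset.sum_nonneg fun i _ => Finset.sum_nonneg fun j _ => sq_nonneg _
    have h2 : (∑ i, ∑ j, (σ x i j - σ x' i j) ^ 2) ≤ (Kσ * ‖x - x'‖) ^ 2 := by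
      nlinarith [Real.sq_sqrt hnn, Real.sqrt_nonneg (∑ i, ∑ j, (σ x i j - σ x' i j) ^ 2)]
    have h3 : ∑ i, ∑ j, (M i j) ^ 2 = ∑ i, ∑ j, (σ x i j - σ x' i j) ^ 2 := by
      refine Finset.sum_congr rfl fun i _ => Finset.sum_congr rfl fun j _ => ?_
      rw [hMdef]; rfl
    rw [h3]
    calc (∑ i, ∑ j, (σ x i j - σ x' i j) ^ 2) ≤ (Kσ * ‖x - x'‖) ^ 2 := h2
      _ = Kσ ^ 2 * ‖x - x'‖ ^ 2 := by ring
  have hbound2 : ∫ u, h u ^ 2 ∂ν ≤ ((1 + Δ * Kb) ^ 2 + Δ * Kσ ^ 2) * ‖x - x'‖ ^ 2 := by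
    rw [hm2]
    have ha2 : ‖a‖ ^ 2 ≤ ((1 + Δ * Kb) * ‖x - x'‖) ^ 2 :=
      pow_le_pow_left₀ (norm_nonneg a) ha 2
    calc ‖a‖ ^ 2 + Δ * ∑ i, ∑ j, (M i j) ^ 2
        ≤ ((1 + Δ * Kb) * ‖x - x'‖) ^ 2 + Δ * (Kσ ^ 2 * ‖x - x'‖ ^ 2) :=
          add_le_add ha2 (mul_le_mul_of_nonneg_left hM hΔ.le)
      _ = ((1 + Δ * Kb) ^ 2 + Δ * Kσ ^ 2) * ‖x - x'‖ ^ 2 := by ring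
  have hexp : ((1 + Δ * Kb) ^ 2 + Δ * Kσ ^ 2) ≤ (Real.exp (Δ * C)) ^ 2 := by
    have h1 : (1 + Δ * Kb) ^ 2 + Δ * Kσ ^ 2 = 1 + 2 * (Δ * C) := by rw [hCdef]; ring
    have h2 := Real.add_one_le_exp (2 * (Δ * C))
    have h3 : Real.exp (2 * (Δ * C)) = (Real.exp (Δ * C)) ^ 2 := by
      rw [two_mul, Real.exp_add, sq]
    linarith
  have hIh : ∫ u, h u ∂ν ≤ Real.exp (Δ * C) * ‖x - x'‖ := by
    calc ∫ u, h u ∂ν ≤ Real.sqrt (∫ u, h u ^ 2 ∂ν) :=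
          my_cs ν (fun u => norm_nonneg _) hInth hInth2
      _ ≤ Real.sqrt (((1 + Δ * Kb) ^ 2 + Δ * Kσ ^ 2) * ‖x - x'‖ ^ 2) :=
          Real.sqrt_le_sqrt hbound2
      _ ≤ Real.sqrt ((Real.exp (Δ * C)) ^ 2 * ‖x - x'‖ ^ 2) :=
          Real.sqrt_le_sqrt (mul_le_mul_of_nonneg_right hexp (sq_nonneg _))
      _ = Real.exp (Δ * C) * ‖x - x'‖ := by
          rw [show (Real.exp (Δ * C)) ^ 2 * ‖x - x'‖ ^ 2
              = (Real.exp (Δ * C) * ‖x - x'‖) ^ 2 by ring,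
            Real.sqrt_sq (by positivity)]
  -- main chain
  rw [hmap x, hmap x', ← integral_sub (hIntg x) (hIntg x')]
  calc |∫ u, (g (myF Δ b σ x u) - g (myF Δ b σ x' u)) ∂ν|
      ≤ ∫ u, |g (myF Δ b σ x u) - g (myF Δ b σ x' u)| ∂ν := by
        simpa [Real.norm_eq_abs] using
          norm_integral_le_integral_norm (fun u => g (myF Δ b σ x u) - g (myF Δ b σ x' u)) (μ := ν)
    _ ≤ ∫ u, L * h u ∂ν :=
        integral_mono ((hIntg x).sub (hIntg x')).abs (hInth.const_mul L) fun u => hpt u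
    _ = L * ∫ u, h u ∂ν := MeasureTheory.integral_const_mul L _
    _ ≤ L * (Real.exp (Δ * C) * ‖x - x'‖) := mul_le_mul_of_nonneg_left hIh hL
    _ = Real.exp (Δ * C) * L * ‖x - x'‖ := by ring
end

section
/- Let X ∈ L²(ℙ;ℝ^d) and let Γ be a quadratic optimal N-quantizer for X (i.e. a minimizer of ‖X − X̂^Γ‖₂ over grids of size ≤ N), with card(supp ℙ_X) ≥ N. Then the Voronoi quantization X̂^Γ is stationary: E[X | X̂^Γ] = X̂^Γ. -/
set_option maxHeartbeats 1000000

open MeasureTheory Metric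
open scoped RealInnerProductSpace

private lemma stmt12_aux_sm {Ω β : Type*} (m : MeasurableSpace Ω) [TopologicalSpace β]
    [TopologicalSpace.PseudoMetrizableSpace β] [SecondCountableTopology β]
    [MeasurableSpace β] [OpensMeasurableSpace β] {f : Ω → β} (hf : Measurable[m] f) :
    StronglyMeasurable[m] f := hf.stronglyMeasurable

/-- Stationarity of optimal quadratic quantizers: if `Γ` minimizes the quadratic quantization
error `‖X − X̂^Γ‖₂` among grids of size `≤ N`, and the support of `ℙ_X` has at least `N`
points, then the Voronoi quantization `X̂ = X̂^Γ` satisfies `E[X | X̂] = X̂`. -/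
theorem stmt12 {d : ℕ} {Ω : Type*} {mΩ : MeasurableSpace Ω} (P : Measure Ω)
    [IsProbabilityMeasure P] (N : ℕ) (hN : 1 ≤ N)
    (X : Ω → EuclideanSpace ℝ (Fin d)) (hXmeas : Measurable X) (hX2 : MemLp X 2 P)
    (hsupp : ∃ f : Fin N → EuclideanSpace ℝ (Fin d), Function.Injective f ∧
      ∀ i, ∀ ε > (0 : ℝ), 0 < Measure.map X P (ball (f i) ε))
    (Γ : Finset (EuclideanSpace ℝ (Fin d))) (hΓne : Γ.Nonempty) (hΓcard : Γ.card ≤ N)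
    (hopt : ∀ Γ' : Finset (EuclideanSpace ℝ (Fin d)), Γ'.Nonempty → Γ'.card ≤ N →
      ∫ ω, (infDist (X ω) ↑Γ) ^ 2 ∂P ≤ ∫ ω, (infDist (X ω) ↑Γ') ^ 2 ∂P)
    (Xhat : Ω → EuclideanSpace ℝ (Fin d)) (hXhatmeas : Measurable Xhat)
    (hXhatΓ : ∀ ω, Xhat ω ∈ Γ)
    (hNN : ∀ ω, dist (X ω) (Xhat ω) = infDist (X ω) ↑Γ) :
    P[X|MeasurableSpace.comap Xhat inferInstance] =ᵐ[P] Xhat := by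
  classical
  have hXint : Integrable X P := hX2.integrable one_le_two
  have hsqint : ∀ c : EuclideanSpace ℝ (Fin d), Integrable (fun ω => ‖X ω - c‖ ^ 2) P := fun c =>
    ((hX2.sub (memLp_const c)).norm).integrable_sq
  have hinf_int : ∀ S : Finset (EuclideanSpace ℝ (Fin d)), S.Nonempty →
      Integrable (fun ω => (infDist (X ω) ↑S) ^ 2) P := by
    rintro S ⟨c, hc⟩
    refine (hsqint c).mono' ?_ ?_
    · exact (((continuous_infDist_pt (↑S : Set (EuclideanSpace ℝ (Fin d)))).measurable.comp hXmeas).pow_const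
        2).aestronglyMeasurable
    · filter_upwards with ω
      rw [Real.norm_eq_abs, abs_of_nonneg (by positivity)]
      have h1 : infDist (X ω) ↑S ≤ ‖X ω - c‖ := by
        rw [← dist_eq_norm]
        exact infDist_le_dist_of_mem (Finset.mem_coe.mpr hc)
      exact pow_le_pow_left₀ infDist_nonneg h1 2
  -- key: on each atom of σ(Xhat), the conditional mean of X is the center
  have key : ∀ a ∈ Γ, ∫ ω in Xhat ⁻¹' {a}, X ω ∂P = ∫ ω in Xhat ⁻¹' {a}, Xhat ω ∂P := by
    intro a ha
    set A := Xhat ⁻¹' {a} with hAdef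
    have hAmeas : MeasurableSet A := hXhatmeas (measurableSet_singleton a)
    have hXhatA : ∀ ω ∈ A, Xhat ω = a := fun ω hω => hω
    have hRHS : ∫ ω in A, Xhat ω ∂P = (P A).toReal • a := by
      rw [setIntegral_congr_fun hAmeas hXhatA, setIntegral_const]; rfl
    rcases eq_or_ne (P A) 0 with h0 | h0
    · rw [hRHS, h0]
      have : P.restrict A = 0 := by simp [Measure.restrict_eq_zero, h0]
      simp [this]
    · have hp : 0 < (P A).toReal :=
        ENNReal.toReal_pos h0 (measure_ne_top P A)
      set p := (P A).toReal with hpdef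
      set b : EuclideanSpace ℝ (Fin d) := p⁻¹ • ∫ ω in A, X ω ∂P with hbdef
      have hIb : ∫ ω in A, X ω ∂P = p • b := (smul_inv_smul₀ hp.ne' _).symm
      have hb_eq : b = a := by
        by_contra hba
        set Γ' := insert b (Γ.erase a) with hΓ'def
        have hΓ'ne : Γ'.Nonempty := ⟨b, Finset.mem_insert_self _ _⟩
        have hΓ'card : Γ'.card ≤ N := by
          refine le_trans (Finset.card_insert_le _ _) ?_
          rw [Finset.card_erase_of_mem ha]
          have h1 : 1 ≤ Γ.card := Finset.card_pos.mpr hΓne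
          omega
        have hf := hinf_int Γ hΓne
        have hf' := hinf_int Γ' hΓ'ne
        have hsub : Integrable (fun ω => X ω - b) P := by
          exact hXint.sub (integrable_const b)
        have hinner_int : Integrable (fun ω => ⟪X ω - b, b - a⟫) P := by
          simpa using hsub.inner_const (b - a)
        -- zero mean of X - b on A
        have hzero : ∫ ω in A, (X ω - b) ∂P = 0 := by
          rw [integral_sub hXint.integrableOn (integrable_const b).integrableOn, hIb,
            setIntegral_const]; exact sub_self _
        -- variance identity
        have hvar : ∫ ω in A, ‖X ω - a‖ ^ 2 ∂P
            = ∫ ω in A, ‖X ω - b‖ ^ 2 ∂P + p * ‖b - a‖ ^ 2 := by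
          have hptws : ∀ ω, ‖X ω - a‖ ^ 2
              = ‖X ω - b‖ ^ 2 + (2 * ⟪X ω - b, b - a⟫ + ‖b - a‖ ^ 2) := by
            intro ω
            have h1 : X ω - a = (X ω - b) + (b - a) := by abel
            rw [h1, norm_add_sq_real]; ring
          have hint1 : IntegrableOn (fun ω => ‖X ω - b‖ ^ 2) A P := (hsqint b).integrableOn
          have hint2 : IntegrableOn
              (fun ω => 2 * ⟪X ω - b, b - a⟫ + ‖b - a‖ ^ 2) A P :=
            (((hinner_int.const_mul 2).add (integrable_const _)).integrableOn)
          calc ∫ ω in A, ‖X ω - a‖ ^ 2 ∂P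
              = ∫ ω in A, (‖X ω - b‖ ^ 2 + (2 * ⟪X ω - b, b - a⟫ + ‖b - a‖ ^ 2)) ∂P := by
                exact integral_congr_ae (Filter.Eventually.of_forall fun ω => hptws ω)
            _ = ∫ ω in A, ‖X ω - b‖ ^ 2 ∂P
                + ∫ ω in A, (2 * ⟪X ω - b, b - a⟫ + ‖b - a‖ ^ 2) ∂P :=
                integral_add hint1 hint2
            _ = ∫ ω in A, ‖X ω - b‖ ^ 2 ∂P + p * ‖b - a‖ ^ 2 := by
                congr 1
                rw [integral_add ((hinner_int.const_mul 2).integrableOn)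
                  (integrable_const _).integrableOn,
                  integral_const_mul, setIntegral_const]
                have hinner : ∫ ω in A, ⟪X ω - b, b - a⟫ ∂P = 0 := by
                  have hcomm : ∀ ω, ⟪X ω - b, b - a⟫ = ⟪b - a, X ω - b⟫ := fun ω =>
                    real_inner_comm _ _
                  rw [integral_congr_ae (Filter.Eventually.of_forall fun ω => hcomm ω),
                    integral_inner hsub.integrableOn, hzero,
                    inner_zero_right]
                rw [hinner]
                simp [smul_eq_mul, mul_comm, hpdef, Measure.real]
        -- on A, infDist X Γ = ‖X - a‖
        have hAΓ : ∫ ω in A, (infDist (X ω) ↑Γ) ^ 2 ∂P = ∫ ω in A, ‖X ω - a‖ ^ 2 ∂P := by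
          refine setIntegral_congr_fun hAmeas fun ω hω => ?_
          rw [← hNN ω, hXhatA ω hω, dist_eq_norm]
        -- strict decrease on A
        have hAlt : ∫ ω in A, (infDist (X ω) ↑Γ') ^ 2 ∂P
            < ∫ ω in A, (infDist (X ω) ↑Γ) ^ 2 ∂P := by
          have h1 : ∫ ω in A, (infDist (X ω) ↑Γ') ^ 2 ∂P ≤ ∫ ω in A, ‖X ω - b‖ ^ 2 ∂P := by
            refine setIntegral_mono_on hf'.integrableOn (hsqint b).integrableOn hAmeas
              fun ω _ => ?_
            have hmem : b ∈ (↑Γ' : Set (EuclideanSpace ℝ (Fin d))) := Finset.mem_coe.mpr (Finset.mem_insert_self _ _)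
            have h2 : infDist (X ω) ↑Γ' ≤ ‖X ω - b‖ := by
              rw [← dist_eq_norm]; exact infDist_le_dist_of_mem hmem
            exact pow_le_pow_left₀ infDist_nonneg h2 2
          have h3 : 0 < p * ‖b - a‖ ^ 2 := by
            have : 0 < ‖b - a‖ := norm_pos_iff.mpr (sub_ne_zero.mpr hba)
            positivity
          rw [hAΓ, hvar]; linarith
        -- no increase on Aᶜ
        have hAc : ∫ ω in Aᶜ, (infDist (X ω) ↑Γ') ^ 2 ∂P
            ≤ ∫ ω in Aᶜ, (infDist (X ω) ↑Γ) ^ 2 ∂P := by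
          refine setIntegral_mono_on hf'.integrableOn hf.integrableOn hAmeas.compl
            fun ω hω => ?_
          have hne : Xhat ω ≠ a := hω
          have hmem : Xhat ω ∈ (↑Γ' : Set (EuclideanSpace ℝ (Fin d))) := Finset.mem_coe.mpr
            (Finset.mem_insert_of_mem (Finset.mem_erase.mpr ⟨hne, hXhatΓ ω⟩))
          have h2 : infDist (X ω) ↑Γ' ≤ infDist (X ω) ↑Γ := by
            rw [← hNN ω]; exact infDist_le_dist_of_mem hmem
          exact pow_le_pow_left₀ infDist_nonneg h2 2
        have hD := hopt Γ' hΓ'ne hΓ'card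
        rw [← integral_add_compl hAmeas hf, ← integral_add_compl hAmeas hf'] at hD
        linarith
      rw [hRHS, hIb, hb_eq]
  -- assemble the conditional expectation statement
  have hm : MeasurableSpace.comap Xhat inferInstance ≤ mΩ := hXhatmeas.comap_le
  haveI : SigmaFinite (P.trim hm) := inferInstance
  have hXhatint : Integrable Xhat P := by
    refine (integrable_const (Γ.sup' hΓne fun c => ‖c‖)).mono'
      hXhatmeas.aestronglyMeasurable ?_
    filter_upwards with ω
    exact Finset.le_sup' (fun c => ‖c‖) (hXhatΓ ω)
  have hgm : AEStronglyMeasurable[MeasurableSpace.comap Xhat inferInstance] Xhat P := by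
    have hmeas : Measurable[MeasurableSpace.comap Xhat inferInstance] Xhat :=
      fun s hs => ⟨s, hs, rfl⟩
    exact StronglyMeasurable.aestronglyMeasurable (stmt12_aux_sm _ hmeas)
  refine (ae_eq_condExp_of_forall_setIntegral_eq hm hXint
    (fun s _ _ => hXhatint.integrableOn) ?_ hgm).symm
  rintro s ⟨t, ht, rfl⟩ -
  have hdecomp : Xhat ⁻¹' t = ⋃ a ∈ Γ.filter (· ∈ t), Xhat ⁻¹' {a} := by
    ext ω
    simp only [Set.mem_preimage, Set.mem_iUnion, Finset.mem_filter, Set.mem_singleton_iff]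
    constructor
    · intro h; exact ⟨Xhat ω, ⟨hXhatΓ ω, h⟩, rfl⟩
    · rintro ⟨a, ⟨-, hat⟩, rfl⟩; exact hat
  have hmeasA : ∀ a ∈ Γ.filter (· ∈ t), MeasurableSet (Xhat ⁻¹' {a}) := fun a _ =>
    hXhatmeas (measurableSet_singleton a)
  have hdisj : Set.Pairwise ↑(Γ.filter (· ∈ t)) (Function.onFun Disjoint fun a => Xhat ⁻¹' {a}) := by
    intro a _ a' _ haa'
    exact Set.disjoint_left.mpr fun ω h1 h2 => haa' (h1.symm.trans h2)
  rw [hdecomp, integral_biUnion_finset _ hmeasA hdisj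
      (fun a _ => hXhatint.integrableOn),
    integral_biUnion_finset _ hmeasA hdisj (fun a _ => hXint.integrableOn)]
  exact Finset.sum_congr rfl fun a haT =>
    (key a (Finset.mem_filter.mp haT).1).symm
end
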